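/- For an ordered set partition β = (B_1,…,B_m) of [n] acting on a permutation π by the pop shuffle (moving the elements of B_1 to the back in their original relative order, then the elements of B_2 after them, and so on), the action is compatible with the monoid product: (α ∘ β) π = α(β π) for all ordered set partitions α, β and all permutations π. -/

import Mathlib

variable {α : Type*} [Fintype α] [DecidableEq α]

/-- `L` is an ordered set partition of the (finite) set of all elements of `α`:
a list of nonempty, pairwise disjoint blocks covering every element. -/
def IsOSP (L : List (Finset α)) : Prop :=
  (∀ b ∈ L, b ≠ ∅) ∧ L.Pairwise (fun a b => Disjoint a b) ∧ ∀ x : α, ∃ b ∈ L, x ∈ b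

/-- The refinement product of ordered set partitions: the blocks are the
nonempty intersections `a_i ∩ b_j`, ordered lexicographically in `(i, j)`. -/
def ospMul (L M : List (Finset α)) : List (Finset α) :=
  (L.flatMap fun a => M.map fun b => a ∩ b).filter (fun b => b ≠ ∅)

/-- The pop shuffle: for each block of `L` in order, list the elements of that
block in the relative order in which they occur in `π`. -/
def popShuffle (L : List (Finset α)) (π : List α) : List α :=
  L.flatMap fun b => π.filter (fun x => x ∈ b)
section

variable {β : Type*} [DecidableEq β]

theorem popShuffle_filter_ne_empty (L : List (Finset β)) (π : List β) :
    popShuffle (L.filter fun b => b ≠ ∅) π = popShuffle L π := by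
  induction L with
  | nil => rfl
  | cons b L ih => by_cases hb : b = ∅ <;> simpa [hb, popShuffle] using ih

theorem popShuffle_flatMap {ι : Type*} (l : List ι) (f : ι → List (Finset β)) (π : List β) :
    popShuffle (l.flatMap f) π = l.flatMap fun i => popShuffle (f i) π :=
  List.flatMap_assoc

theorem popShuffle_map_inter (a : Finset β) (M : List (Finset β)) (π : List β) :
    popShuffle (M.map fun b => a ∩ b) π = (popShuffle M π).filter (· ∈ a) := by
  simp [popShuffle, List.flatMap_map, List.filter_flatMap, List.filter_filter]

end

theorem popShuffle_mul_general (L M : List (Finset α)) (π : List α) :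
    popShuffle (ospMul L M) π = popShuffle L (popShuffle M π) := by
  rw [ospMul, popShuffle_filter_ne_empty, popShuffle_flatMap]
  simp only [popShuffle_map_inter]
  rfl

/-- The pop shuffle action is compatible with the refinement product:
`(α ∘ β) π = α (β π)`. -/
theorem popShuffle_mul (L M : List (Finset α)) (π : List α)
    (hL : IsOSP L) (hM : IsOSP M) (hπ : π.Nodup ∧ ∀ x : α, x ∈ π) :
    popShuffle (ospMul L M) π = popShuffle L (popShuffle M π) :=
  popShuffle_mul_general L M π
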